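/- arXiv:math/0407440 — 2 statements merged into one kernel-verified Lean document; each statement's English description precedes it below -/
import Mathlib

section
/- Suppose κ is a regular limit cardinal and H is an ideal on P_κ(λ) with cof(H) < cov(M_{κ,κ}). Then H⁺ →_κ [H⁺]_{κ⁺}²: for every F : [P_κ(λ)]_κ² → κ⁺ and every A ∈ H⁺ there is B ∈ H⁺ ∩ P(A) such that F''[B]_κ² ≠ κ⁺ (F omits some value on [B]_κ²). -/
open Cardinal Set

namespace PaperFormal

noncomputable section

/-- The least (small) cardinality of a family `F : Set X` satisfying `P`. -/
def leastCard {X : Type 1} (P : Set X → Prop) : Cardinal.{0} :=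
  sInf {c : Cardinal.{0} | ∃ F : Set X, P F ∧ Cardinal.lift.{1} c = #F}

/-- The collection of (codings of) functions from `κ` to `κ`. -/
def funOn (κ : Cardinal.{0}) : Set (Ordinal.{0} → Ordinal.{0}) :=
  {f | ∀ α < κ.ord, f α < κ.ord}

/-- The unequality number `U_κ`. -/
def uneq (κ : Cardinal.{0}) : Cardinal.{0} :=
  leastCard fun F : Set (Ordinal.{0} → Ordinal.{0}) => F ⊆ funOn κ ∧
    ∀ g ∈ funOn κ, ∃ f ∈ F, {α | α < κ.ord ∧ f α = g α} = ∅

/-- The dominating number `d_κ`. -/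
def domNum (κ : Cardinal.{0}) : Cardinal.{0} :=
  leastCard fun F : Set (Ordinal.{0} → Ordinal.{0}) => F ⊆ funOn κ ∧
    ∀ g ∈ funOn κ, ∃ f ∈ F, ∀ α < κ.ord, g α < f α

/-- The number `d̄_κ`. -/
def domBar (κ : Cardinal.{0}) : Cardinal.{0} :=
  leastCard fun X : Set (Ordinal.{0} → Ordinal.{0}) => X ⊆ funOn κ ∧
    ∀ g ∈ funOn κ, ∃ x ⊆ X, x.Nonempty ∧ #x < Cardinal.lift.{1} κ ∧
      ∀ α < κ.ord, g α < sSup {o | ∃ f ∈ x, f α = o}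

/-- The generalized Cantor space `^ρ2`, with points coded as subsets of `Iio ρ.ord`. -/
def cantor (ρ : Cardinal.{0}) : Set (Set Ordinal.{0}) := {x | x ⊆ Iio ρ.ord}

/-- A forcing condition: a pair `(a, t)` with `t ⊆ a ⊆ Iio ρ.ord` and `|a| < ν`. -/
def IsCond (ν ρ : Cardinal.{0}) (a t : Set Ordinal.{0}) : Prop :=
  a ⊆ Iio ρ.ord ∧ t ⊆ a ∧ #a < Cardinal.lift.{1} ν

/-- The basic open set determined by a condition. -/
def basicOpen (ρ : Cardinal.{0}) (a t : Set Ordinal.{0}) : Set (Set Ordinal.{0}) :=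
  {x | x ⊆ Iio ρ.ord ∧ x ∩ a = t}

/-- Dense open subsets of `^ρ2` (for the `<ν`-support topology). -/
def DenseOpen (ν ρ : Cardinal.{0}) (D : Set (Set Ordinal.{0})) : Prop :=
  D ⊆ cantor ρ ∧
  (∀ x ∈ D, ∃ a t, IsCond ν ρ a t ∧ x ∈ basicOpen ρ a t ∧ basicOpen ρ a t ⊆ D) ∧
  (∀ a t, IsCond ν ρ a t → (basicOpen ρ a t ∩ D).Nonempty)

/-- Members of `M_{ν,ρ}`. -/
def Meager (ν ρ : Cardinal.{0}) (W : Set (Set Ordinal.{0})) : Prop :=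
  W ⊆ cantor ρ ∧ ∃ X : Set (Set (Set Ordinal.{0})), X.Nonempty ∧
    #X ≤ Cardinal.lift.{1} ν ∧ (∀ D ∈ X, DenseOpen ν ρ D) ∧ W ∩ ⋂₀ X = ∅

/-- The covering number for category `cov(M_{ν,ρ})`. -/
def covM (ν ρ : Cardinal.{0}) : Cardinal.{0} :=
  leastCard fun Y : Set (Set (Set Ordinal.{0})) =>
    (∀ W ∈ Y, Meager ν ρ W) ∧ ⋃₀ Y = cantor ρ

/-- A (`κ`-complete) ideal on `κ`. -/
structure IdealK (κ : Cardinal.{0}) where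
  mem : Set (Set Ordinal.{0})
  subset_iio : ∀ A ∈ mem, A ⊆ Iio κ.ord
  singleton_mem : ∀ α < κ.ord, {α} ∈ mem
  subset_mem : ∀ A ∈ mem, ∀ B ⊆ A, B ∈ mem
  sUnion_mem : ∀ X : Set (Set Ordinal.{0}), X ⊆ mem → #X < Cardinal.lift.{1} κ → ⋃₀ X ∈ mem
  ne_top : Iio κ.ord ∉ mem

/-- `J⁺`, the sets (⊆ κ) not in the ideal. -/
def IdealK.plus {κ : Cardinal.{0}} (J : IdealK κ) : Set (Set Ordinal.{0}) :=
  {A | A ⊆ Iio κ.ord ∧ A ∉ J.mem}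

/-- `cof(J)`. -/
def IdealK.cof {κ : Cardinal.{0}} (J : IdealK κ) : Cardinal.{0} :=
  leastCard fun X : Set (Set Ordinal.{0}) =>
    X ⊆ J.mem ∧ ∀ A, A ∈ J.mem ↔ ∃ B ∈ X, A ⊆ B

/-- `cof̄(J)`. -/
def IdealK.cofBar {κ : Cardinal.{0}} (J : IdealK κ) : Cardinal.{0} :=
  leastCard fun X : Set (Set Ordinal.{0}) =>
    X ⊆ J.mem ∧ ∀ A ∈ J.mem, ∃ x ⊆ X, #x < Cardinal.lift.{1} κ ∧ A ⊆ ⋃₀ x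

/-- `non_κ(P)`. -/
def nonK (κ : Cardinal.{0}) (P : IdealK κ → Prop) : Cardinal.{0} :=
  sInf {c | ∃ J : IdealK κ, J.cof = c ∧ ¬ P J}

/-- `non̄_κ(P)`. -/
def nonBarK (κ : Cardinal.{0}) (P : IdealK κ → Prop) : Cardinal.{0} :=
  sInf {c | ∃ J : IdealK κ, J.cofBar = c ∧ ¬ P J}

/-- Weak `P`-point. -/
def WeakPPoint {κ : Cardinal.{0}} (J : IdealK κ) : Prop :=
  ∀ A ∈ J.plus, ∀ f : Ordinal.{0} → Ordinal.{0},
    (∀ α ∈ A, f α < κ.ord) → (∀ β, {α ∈ A | f α = β} ∈ J.mem) →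
    ∃ B ∈ J.plus, B ⊆ A ∧ ∀ β, #{α ∈ B | f α = β} < Cardinal.lift.{1} κ

/-- Weak `Q`-point. -/
def WeakQPoint {κ : Cardinal.{0}} (J : IdealK κ) : Prop :=
  ∀ A ∈ J.plus, ∀ g ∈ funOn κ,
    ∃ B ∈ J.plus, B ⊆ A ∧ ∀ α ∈ B, ∀ β ∈ B, α < β → g α < β

/-- Weakly selective ideal. -/
def WeaklySelective {κ : Cardinal.{0}} (J : IdealK κ) : Prop :=
  WeakPPoint J ∧ WeakQPoint J

/-- Weak semi-`Q`-point. -/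
def WeakSemiQPoint {κ : Cardinal.{0}} (J : IdealK κ) : Prop :=
  ∀ A ∈ J.plus, ∀ f : Ordinal.{0} → Ordinal.{0},
    (∀ α ∈ A, f α < κ.ord) →
    (∀ β, #{α ∈ A | f α = β} < Cardinal.lift.{1} κ) →
    ∃ C ∈ J.plus, C ⊆ A ∧ ∀ β < κ.ord, #{α ∈ C | f α = β} ≤ Cardinal.lift.{1} β.card

/-- `P_κ(λ)`, coded as the small subsets of `Iio λ.ord`. -/
def smallSet (κ lam : Cardinal.{0}) : Set (Set Ordinal.{0}) :=
  {a | a ⊆ Iio lam.ord ∧ #a < Cardinal.lift.{1} κ}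

/-- The ideal `I_{κ,λ}` of noncofinal subsets of `P_κ(λ)`. -/
def Ikl (κ lam : Cardinal.{0}) : Set (Set (Set Ordinal.{0})) :=
  {A | A ⊆ smallSet κ lam ∧ ∃ a ∈ smallSet κ lam, ∀ b ∈ A, ¬ a ⊆ b}

/-- A (`κ`-complete fine) ideal on `P_κ(λ)`. -/
structure IdealP (κ lam : Cardinal.{0}) where
  mem : Set (Set (Set Ordinal.{0}))
  subset_pk : ∀ A ∈ mem, A ⊆ smallSet κ lam
  fine : Ikl κ lam ⊆ mem
  subset_mem : ∀ A ∈ mem, ∀ B ⊆ A, B ∈ mem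
  sUnion_mem : ∀ X : Set (Set (Set Ordinal.{0})), X ⊆ mem →
    #X < Cardinal.lift.{1} κ → ⋃₀ X ∈ mem
  ne_top : smallSet κ lam ∉ mem

/-- `H⁺` computed from the underlying collection `Hm` of an ideal on `P_κ(λ)`. -/
def plusOf (κ lam : Cardinal.{0}) (Hm : Set (Set (Set Ordinal.{0}))) :
    Set (Set (Set Ordinal.{0})) :=
  {A | A ⊆ smallSet κ lam ∧ A ∉ Hm}

/-- `H⁺`. -/
def IdealP.plus {κ lam : Cardinal.{0}} (H : IdealP κ lam) : Set (Set (Set Ordinal.{0})) :=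
  plusOf κ lam H.mem

/-- `cof(H)`. -/
def IdealP.cof {κ lam : Cardinal.{0}} (H : IdealP κ lam) : Cardinal.{0} :=
  leastCard fun X : Set (Set (Set Ordinal.{0})) =>
    X ⊆ H.mem ∧ ∀ A, A ∈ H.mem ↔ ∃ B ∈ X, A ⊆ B

/-- `cof̄(H)`. -/
def IdealP.cofBar {κ lam : Cardinal.{0}} (H : IdealP κ lam) : Cardinal.{0} :=
  leastCard fun X : Set (Set (Set Ordinal.{0})) =>
    X ⊆ H.mem ∧ ∀ A ∈ H.mem, ∃ x ⊆ X, #x < Cardinal.lift.{1} κ ∧ A ⊆ ⋃₀ x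

/-- `d^κ_{κ,λ}`. -/
def domP (κ lam : Cardinal.{0}) : Cardinal.{0} :=
  leastCard fun F : Set (Ordinal.{0} → Set Ordinal.{0}) =>
    (∀ f ∈ F, ∀ α < κ.ord, f α ∈ smallSet κ lam) ∧
    ∀ g : Ordinal.{0} → Set Ordinal.{0}, (∀ α < κ.ord, g α ∈ smallSet κ lam) →
      ∃ f ∈ F, ∀ α < κ.ord, g α ⊆ f α

/-- A maximal almost disjoint family of size `≥ κ` for `H` (a member of `M_H^{≥κ}`). -/
def IsMad {κ lam : Cardinal.{0}} (H : IdealP κ lam) (Q : Set (Set (Set Ordinal.{0}))) : Prop :=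
  Q ⊆ H.plus ∧ Cardinal.lift.{1} κ ≤ #Q ∧
  (∀ A ∈ Q, ∀ B ∈ Q, A ≠ B → A ∩ B ∈ H.mem) ∧
  ∀ C ∈ H.plus, ∃ A ∈ Q, A ∩ C ∈ H.plus

/-- The (small) cardinal `c` with `lift c = c'`, used to pull `λ^{<κ} = |P_κ(λ)|` down. -/
def downCard (c : Cardinal.{1}) : Cardinal.{0} :=
  sInf {d : Cardinal.{0} | Cardinal.lift.{1} d = c}

open Classical in
/-- The number `a_H`. -/
def aNum {κ lam : Cardinal.{0}} (H : IdealP κ lam) : Cardinal.{0} :=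
  if ∃ Q, IsMad H Q then sInf {c | ∃ Q, IsMad H Q ∧ Cardinal.lift.{1} c = #Q}
  else 2 ^ Order.succ (downCard #(smallSet κ lam))

/-- Weak `π`-point. -/
def WeakPiPoint {κ lam : Cardinal.{0}} (H : IdealP κ lam) : Prop :=
  ∀ f : Ordinal.{0} → Set (Set Ordinal.{0}), (∀ α < κ.ord, f α ∈ H.mem) →
    ∀ A ∈ H.plus, ∃ B ∈ H.plus, B ⊆ A ∧ ∀ α < κ.ord, B ∩ f α ∈ Ikl κ lam

/-- `∪(a ∩ κ)`. -/
def supK (κ : Cardinal.{0}) (a : Set Ordinal.{0}) : Ordinal.{0} :=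
  sSup (a ∩ Iio κ.ord)

/-- The relation `a ≺ b`. -/
def prec (κ : Cardinal.{0}) (a b : Set Ordinal.{0}) : Prop :=
  a ⊆ b ∧ supK κ a < supK κ b

/-- `[A]_κ²`. -/
def pairsK (κ : Cardinal.{0}) (A : Set (Set Ordinal.{0})) : Set (Ordinal.{0} × Set Ordinal.{0}) :=
  {p | ∃ a ∈ A, ∃ b ∈ A, supK κ a < supK κ b ∧ p = (supK κ a, b)}

/-- `[A]_≺²`. -/
def pairsPrec (κ : Cardinal.{0}) (A : Set (Set Ordinal.{0})) :
    Set (Ordinal.{0} × Set Ordinal.{0}) :=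
  {p | ∃ a ∈ A, ∃ b ∈ A, prec κ a b ∧ p = (supK κ a, b)}

/-- `[A]_{κ,κ}²`. -/
def pairsKK (κ : Cardinal.{0}) (A : Set (Set Ordinal.{0})) : Set (Ordinal.{0} × Ordinal.{0}) :=
  {p | ∃ a ∈ A, ∃ b ∈ A, supK κ a < supK κ b ∧ p = (supK κ a, supK κ b)}

/-- `S` is a set of ordinals of order type `α`. -/
def OrdType (S : Set Ordinal.{0}) (α : Ordinal.{0}) : Prop :=
  ∃ e : Ordinal.{0} → Ordinal.{0},
    (∀ i < α, ∀ j < α, i < j → e i < e j) ∧ e '' Iio α = S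

/-- `(B, ≺)` has order type `α`. -/
def OrdTypePrec (κ : Cardinal.{0}) (B : Set (Set Ordinal.{0})) (α : Ordinal.{0}) : Prop :=
  ∃ e : Ordinal.{0} → Set Ordinal.{0},
    (∀ i < α, ∀ j < α, i < j → prec κ (e i) (e j)) ∧ e '' Iio α = B

/-- The partition relation `κ → (κ, θ)²`. -/
def ArrowKTheta (κ : Cardinal.{0}) (θ : Ordinal.{0}) : Prop :=
  ∀ f : Ordinal.{0} → Ordinal.{0} → Fin 2, ∃ A ⊆ Iio κ.ord,
    (OrdType A κ.ord ∧ ∀ α ∈ A, ∀ β ∈ A, α < β → f α β = 0) ∨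
    (OrdType A θ ∧ ∀ α ∈ A, ∀ β ∈ A, α < β → f α β = 1)

/-- `κ` is weakly compact. -/
def WeaklyCompact (κ : Cardinal.{0}) : Prop :=
  ∀ f : Ordinal.{0} → Ordinal.{0} → Fin 2, ∃ A ⊆ Iio κ.ord,
    OrdType A κ.ord ∧ ∃ i, ∀ α ∈ A, ∀ β ∈ A, α < β → f α β = i

/-- The partition relation `J⁺ → (J⁺, α)²` for an ideal on `κ`. -/
def ArrowJ {κ : Cardinal.{0}} (J : IdealK κ) (α : Ordinal.{0}) : Prop :=
  ∀ A ∈ J.plus, ∀ f : Ordinal.{0} → Ordinal.{0} → Fin 2,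
    ∃ B ⊆ A, (B ∈ J.plus ∧ ∀ β ∈ B, ∀ γ ∈ B, β < γ → f β γ = 0) ∨
             (OrdType B α ∧ ∀ β ∈ B, ∀ γ ∈ B, β < γ → f β γ = 1)

/-- The square bracket relation `J⁺ → [J⁺]_ρ²` for an ideal on `κ`. -/
def SqBrJ {κ : Cardinal.{0}} (J : IdealK κ) (ρ : Cardinal.{0}) : Prop :=
  ∀ A ∈ J.plus, ∀ f : Ordinal.{0} → Ordinal.{0} → Ordinal.{0},
    (∀ β ∈ A, ∀ γ ∈ A, β < γ → f β γ < ρ.ord) →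
    ∃ B ∈ J.plus, B ⊆ A ∧ {ξ | ∃ β ∈ B, ∃ γ ∈ B, β < γ ∧ f β γ = ξ} ≠ Iio ρ.ord

/-- `H⁺ →_κ (H⁺, α)²`. -/
def ArrowP (κ lam : Cardinal.{0}) (Hm : Set (Set (Set Ordinal.{0}))) (α : Ordinal.{0}) : Prop :=
  ∀ F : Ordinal.{0} → Set Ordinal.{0} → Fin 2, ∀ A ∈ plusOf κ lam Hm,
    ∃ B ⊆ A, (B ∈ plusOf κ lam Hm ∧ ∀ p ∈ pairsK κ B, F p.1 p.2 = 0) ∨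
             (OrdTypePrec κ B α ∧ ∀ p ∈ pairsK κ B, F p.1 p.2 = 1)

/-- `H⁺ →_{κ,κ} (H⁺, α)²`. -/
def ArrowPKK (κ lam : Cardinal.{0}) (Hm : Set (Set (Set Ordinal.{0}))) (α : Ordinal.{0}) : Prop :=
  ∀ F : Ordinal.{0} → Ordinal.{0} → Fin 2, ∀ A ∈ plusOf κ lam Hm,
    ∃ B ⊆ A, (B ∈ plusOf κ lam Hm ∧ ∀ p ∈ pairsKK κ B, F p.1 p.2 = 0) ∨
             (OrdTypePrec κ B α ∧ ∀ p ∈ pairsKK κ B, F p.1 p.2 = 1)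

/-- `H⁺ →_{κ,κ} (H⁺; α)²`. -/
def ArrowPKKsemi (κ lam : Cardinal.{0}) (Hm : Set (Set (Set Ordinal.{0}))) (α : Ordinal.{0}) :
    Prop :=
  ∀ F : Ordinal.{0} → Ordinal.{0} → Fin 2, ∀ A ∈ plusOf κ lam Hm,
    ∃ B ⊆ A, (B ∈ plusOf κ lam Hm ∧ ∀ p ∈ pairsKK κ B, F p.1 p.2 = 0) ∨
             (OrdType {o | ∃ a ∈ B, supK κ a = o} α ∧ ∀ p ∈ pairsKK κ B, F p.1 p.2 = 1)

/-- `H⁺ →_κ (H⁺)²`. -/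
def ArrowPConst (κ lam : Cardinal.{0}) (Hm : Set (Set (Set Ordinal.{0}))) : Prop :=
  ∀ F : Ordinal.{0} → Set Ordinal.{0} → Fin 2, ∀ A ∈ plusOf κ lam Hm,
    ∃ B ∈ plusOf κ lam Hm, B ⊆ A ∧ ∃ i, ∀ p ∈ pairsK κ B, F p.1 p.2 = i

/-- `H⁺ →_{κ,κ} [H⁺]_ρ²`. -/
def SqBrPKK (κ lam : Cardinal.{0}) (Hm : Set (Set (Set Ordinal.{0}))) (ρ : Cardinal.{0}) : Prop :=
  ∀ F : Ordinal.{0} → Ordinal.{0} → Ordinal.{0},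
    (∀ α β : Ordinal.{0}, α < β → β < κ.ord → F α β < ρ.ord) →
    ∀ A ∈ plusOf κ lam Hm, ∃ B ∈ plusOf κ lam Hm, B ⊆ A ∧
      {ξ | ∃ p ∈ pairsKK κ B, F p.1 p.2 = ξ} ≠ Iio ρ.ord

/-- The class `K(κ,λ)`. -/
def Kset (κ lam : Cardinal.{0}) : Set Cardinal.{0} :=
  {σ | lam ≤ σ ∧ ∃ T ⊆ smallSet κ lam, Cardinal.lift.{1} σ = #T ∧
    ∀ a ∈ smallSet κ lam, #{t ∈ T | t ⊆ a} < Cardinal.lift.{1} κ}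

end

end PaperFormal

namespace PaperFormal

/-!
Choose a colour `ξ < κ⁺` such that for every `γ < κ` the set of `b ∈ A` with `F δ b ≠ ξ` for all
`δ < γ` is `H`-positive. If there were none, pigeonhole would give one `γ` together with `|γ|⁺ < κ`
colours (`κ` is a limit cardinal) each avoided only on an `H`-null set; a `b ∈ A` outside
the union of these null sets receives all of those colours from the `|γ|` ordinals below `γ`.

For `x ⊆ κ` let `B_x = avoidSet κ F ξ A x` be the set of `b ∈ A` with `supK κ b ∈ x` and
`F δ b ≠ ξ` for `δ ∈ x` below `supK κ b`; then `ξ` is not a colour on `[B_x]_κ²`. For each `C` in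
a cofinal subfamily of `H` the `x` with `B_x ⊄ C` form a dense open set, and
`cof(H) < cov(M_{κ,κ})` yields an `x` lying in all of them, i.e. with `B_x ∈ H⁺`.
-/

open Order

section LeastCard

variable {X : Type 1} {P : Set X → Prop}

theorem lift_leastCard_le {F : Set X} (hF : P F) : Cardinal.lift.{1} (leastCard P) ≤ #F := by
  by_contra! h
  obtain ⟨c, hc⟩ := Cardinal.mem_range_lift_of_le h.le
  have hle : leastCard P ≤ c := csInf_le' ⟨F, hF, hc⟩
  exact h.not_ge (hc ▸ Cardinal.lift_le.mpr hle)

theorem exists_lift_leastCard_eq {F : Set X} (hF : P F) {c : Cardinal.{0}}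
    (hc : #F ≤ Cardinal.lift.{1} c) : ∃ G, P G ∧ Cardinal.lift.{1} (leastCard P) = #G := by
  obtain ⟨d, hd⟩ := Cardinal.mem_range_lift_of_le hc
  exact csInf_mem (s := {c | ∃ G, P G ∧ Cardinal.lift.{1} c = #G}) ⟨d, F, hF, hd⟩

end LeastCard

section Ordinals

variable {κ : Cardinal.{0}}

theorem exists_lt_ord_forall_lt (hreg : κ.IsRegular) {s : Set Ordinal.{0}}
    (hs : s ⊆ Iio κ.ord) (hcard : #s < Cardinal.lift.{1} κ) : ∃ γ < κ.ord, ∀ δ ∈ s, δ < γ := by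
  refine ⟨⨆ δ : s, (δ : Ordinal.{0}) + 1, ?_, fun δ hδ => ?_⟩
  · refine Ordinal.lift_iSup_add_one_lt_of_lt_cof ?_ fun δ => hs δ.2
    rwa [← Ordinal.lift_cof, hreg.cof_ord, Cardinal.lift_uzero]
  · have hbdd : BddAbove (range fun δ : s => (δ : Ordinal.{0}) + 1) := by
      refine ⟨κ.ord, ?_⟩
      rintro _ ⟨δ, rfl⟩
      exact Order.add_one_le_of_lt (hs δ.2)
    exact (Order.lt_add_one_iff.mpr le_rfl).trans_le (le_ciSup hbdd ⟨δ, hδ⟩)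

theorem supK_lt_ord (hreg : κ.IsRegular) {b : Set Ordinal.{0}} (hb : #b < Cardinal.lift.{1} κ) :
    supK κ b < κ.ord := by
  obtain ⟨γ, hγ, hbound⟩ := exists_lt_ord_forall_lt hreg inter_subset_right
    ((Cardinal.mk_le_mk_of_subset inter_subset_left).trans_lt hb)
  exact (csSup_le' fun δ hδ => (hbound δ hδ).le).trans_lt hγ

theorem le_supK {b : Set Ordinal.{0}} {δ : Ordinal.{0}} (hδb : δ ∈ b) (hδ : δ < κ.ord) :
    δ ≤ supK κ b :=
  le_csSup ⟨κ.ord, fun _ h => h.2.le⟩ ⟨hδb, hδ⟩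

theorem exists_lift_lt_mk_fiber (hκ : ℵ₀ ≤ κ) {g : Ordinal.{0} → Ordinal.{0}}
    (hg : ∀ ξ < (succ κ).ord, g ξ < κ.ord) :
    ∃ γ < κ.ord, Cardinal.lift.{1} κ < #{ξ | ξ < (succ κ).ord ∧ g ξ = γ} := by
  have hκ' : ℵ₀ ≤ Cardinal.lift.{1} κ := Cardinal.aleph0_le_lift.mpr hκ
  obtain ⟨⟨γ, hγ⟩, hfib⟩ := Cardinal.infinite_pigeonhole_card
    (fun ξ : Iio (succ κ).ord => (⟨g ξ, hg ξ ξ.2⟩ : Iio κ.ord)) (succ (Cardinal.lift.{1} κ))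
    (by rw [Cardinal.mk_Iio_ordinal, Cardinal.card_ord, Cardinal.lift_succ])
    (hκ'.trans (le_succ _))
    (by rw [(Cardinal.isRegular_succ hκ').cof_ord, Cardinal.mk_Iio_ordinal, Cardinal.card_ord]
        exact lt_succ _)
  refine ⟨γ, hγ, (lt_succ _).trans_le (hfib.trans ?_)⟩
  rw [← Cardinal.mk_image_eq Subtype.val_injective]
  refine Cardinal.mk_le_mk_of_subset ?_
  rintro _ ⟨ξ, hξ, rfl⟩
  exact ⟨ξ.2, congrArg Subtype.val (mem_singleton_iff.mp hξ)⟩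

end Ordinals

section Ideal

variable {κ lam : Cardinal.{0}} (H : IdealP κ lam)

theorem IdealP.exists_mem_notMem {A U : Set (Set Ordinal.{0})} (hA : A ∉ H.mem)
    (hU : U ∈ H.mem) : ∃ b ∈ A, b ∉ U := by
  by_contra! h
  exact hA (H.subset_mem U hU A h)

theorem IdealP.union_mem (hκ : ℵ₀ ≤ κ) {A B : Set (Set Ordinal.{0})} (hA : A ∈ H.mem)
    (hB : B ∈ H.mem) : A ∪ B ∈ H.mem := by
  rw [← sUnion_pair]
  refine H.sUnion_mem _ (pair_subset hA hB) ?_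
  exact ((finite_singleton B).insert A).lt_aleph0.trans_le (Cardinal.aleph0_le_lift.mpr hκ)

theorem IdealP.supK_lt_mem (hκ : ℵ₀ ≤ κ) (hlt : κ < lam) {γ : Ordinal.{0}} (hγ : γ < κ.ord) :
    {b ∈ smallSet κ lam | supK κ b < γ} ∈ H.mem := by
  have hγs : {γ} ∈ smallSet κ lam := by
    refine ⟨singleton_subset_iff.mpr (hγ.trans_le (Cardinal.ord_le_ord.mpr hlt.le)), ?_⟩
    rw [Cardinal.mk_singleton]
    exact Cardinal.one_lt_aleph0.trans_le (Cardinal.aleph0_le_lift.mpr hκ)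
  exact H.fine ⟨sep_subset _ _, {γ}, hγs, fun b hb hγb => (le_supK (hγb rfl) hγ).not_gt hb.2⟩

theorem IdealP.exists_subset_image {A : Set (Set Ordinal.{0})} (hA : A ∉ H.mem)
    {F : Ordinal.{0} → Set Ordinal.{0} → Ordinal.{0}} {γ : Ordinal.{0}} {s : Set Ordinal.{0}}
    (hs : #s < Cardinal.lift.{1} κ) (hsmall : ∀ ξ ∈ s, {b ∈ A | ∀ δ < γ, F δ b ≠ ξ} ∈ H.mem) :
    ∃ b ∈ A, s ⊆ (F · b) '' Iio γ := by
  obtain ⟨b, hbA, hbU⟩ := H.exists_mem_notMem hA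
    (H.sUnion_mem _ (image_subset_iff.mpr hsmall) (Cardinal.mk_image_le.trans_lt hs))
  refine ⟨b, hbA, fun ξ hξ => ?_⟩
  by_contra hξb
  exact hbU ⟨_, mem_image_of_mem _ hξ, hbA, fun δ hδ hF => hξb ⟨δ, hδ, hF⟩⟩

theorem IdealP.exists_color_avoided_on_positive (hreg : κ.IsRegular) (hlim : IsSuccLimit κ)
    {A : Set (Set Ordinal.{0})} (hA : A ∉ H.mem) (F : Ordinal.{0} → Set Ordinal.{0} → Ordinal.{0}) :
    ∃ ξ < (succ κ).ord, ∀ γ < κ.ord, {b ∈ A | ∀ δ < γ, F δ b ≠ ξ} ∉ H.mem := by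
  by_contra! h
  choose! g hg hgmem using h
  obtain ⟨γ, hγ, hfib⟩ := exists_lift_lt_mk_fiber hreg.aleph0_le hg
  have hν : succ γ.card < κ := hlim.succ_lt (Cardinal.lt_ord.mp hγ)
  obtain ⟨s, hsfib, hs⟩ :=
    Cardinal.le_mk_iff_exists_subset.mp ((Cardinal.lift_le.mpr hν.le).trans hfib.le)
  obtain ⟨b, -, hb⟩ := H.exists_subset_image hA (hs ▸ Cardinal.lift_lt.mpr hν)
    fun ξ hξ => (hsfib hξ).2 ▸ hgmem ξ (hsfib hξ).1
  have hle : Cardinal.lift.{1} (succ γ.card) ≤ Cardinal.lift.{1} γ.card :=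
    calc Cardinal.lift.{1} (succ γ.card) = #s := hs.symm
      _ ≤ #((F · b) '' Iio γ) := Cardinal.mk_le_mk_of_subset hb
      _ ≤ #(Iio γ) := Cardinal.mk_image_le
      _ = Cardinal.lift.{1} γ.card := Cardinal.mk_Iio_ordinal γ
  exact (lt_succ γ.card).not_ge (Cardinal.lift_le.mp hle)

end Ideal

section Category

variable {ν ρ : Cardinal.{0}}

theorem DenseOpen.meager_diff (hν : ν ≠ 0) {D : Set (Set Ordinal.{0})} (hD : DenseOpen ν ρ D) :
    Meager ν ρ (cantor ρ \ D) := by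
  refine ⟨sdiff_subset, {D}, singleton_nonempty D, ?_, by simpa using hD, ?_⟩
  · rw [Cardinal.mk_singleton, Cardinal.one_le_iff_ne_zero, Ne, Cardinal.lift_eq_zero]
    exact hν
  · rw [sInter_singleton, sdiff_inter_self]

theorem exists_forall_mem_of_lt_covM (hν : ν ≠ 0) {𝒟 : Set (Set (Set Ordinal.{0}))}
    (h𝒟 : ∀ D ∈ 𝒟, DenseOpen ν ρ D) (hcard : #𝒟 < Cardinal.lift.{1} (covM ν ρ)) :
    ∃ x ∈ cantor ρ, ∀ D ∈ 𝒟, x ∈ D := by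
  by_contra! h
  have hcover : ⋃₀ ((cantor ρ \ ·) '' 𝒟) = cantor ρ := by
    refine (sUnion_subset ?_).antisymm fun x hx => ?_
    · rintro _ ⟨D, -, rfl⟩
      exact sdiff_subset
    · obtain ⟨D, hD, hxD⟩ := h x hx
      exact ⟨_, ⟨D, hD, rfl⟩, hx, hxD⟩
  have hmeager : ∀ W ∈ (cantor ρ \ ·) '' 𝒟, Meager ν ρ W := by
    rintro _ ⟨D, hD, rfl⟩
    exact (h𝒟 D hD).meager_diff hν
  exact hcard.not_ge ((lift_leastCard_le ⟨hmeager, hcover⟩).trans Cardinal.mk_image_le)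

end Category

theorem IdealP.exists_cofinal_lift_cof_eq {κ lam : Cardinal.{0}} (H : IdealP κ lam) :
    ∃ X : Set (Set (Set Ordinal.{0})), (X ⊆ H.mem ∧ ∀ A, A ∈ H.mem ↔ ∃ B ∈ X, A ⊆ B) ∧
      Cardinal.lift.{1} H.cof = #X := by
  refine exists_lift_leastCard_eq (c := 2 ^ (2 : Cardinal.{0}) ^ lam)
    ⟨Subset.rfl, fun A => ⟨fun hA => ⟨A, hA, Subset.rfl⟩, fun ⟨B, hB, hAB⟩ => H.subset_mem B hB A hAB⟩⟩
    ?_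
  have hsub : H.mem ⊆ 𝒫 𝒫 Iio lam.ord := fun A hA _ ha => (H.subset_pk A hA ha).1
  refine (Cardinal.mk_le_mk_of_subset hsub).trans_eq ?_
  simp [Cardinal.mk_powerset, Cardinal.mk_Iio_ordinal, Cardinal.lift_power]

section Avoid

variable {κ : Cardinal.{0}} {F : Ordinal.{0} → Set Ordinal.{0} → Ordinal.{0}} {ξ : Ordinal.{0}}
  {A : Set (Set Ordinal.{0})}

def avoidSet (κ : Cardinal.{0}) (F : Ordinal.{0} → Set Ordinal.{0} → Ordinal.{0}) (ξ : Ordinal.{0})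
    (A : Set (Set Ordinal.{0})) (x : Set Ordinal.{0}) : Set (Set Ordinal.{0}) :=
  {b ∈ A | supK κ b ∈ x ∧ ∀ δ ∈ x, δ < supK κ b → F δ b ≠ ξ}

theorem notMem_image_pairsK_avoidSet (x : Set Ordinal.{0}) :
    ξ ∉ {ζ | ∃ p ∈ pairsK κ (avoidSet κ F ξ A x), F p.1 p.2 = ζ} := by
  rintro ⟨_, ⟨a, ha, b, hb, hab, rfl⟩, hF⟩
  exact hb.2.2 (supK κ a) ha.2.1 hab hF

theorem mem_avoidSet_of_inter_eq {b : Set Ordinal.{0}} {y z : Set Ordinal.{0}}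
    (hb : b ∈ avoidSet κ F ξ A y) (hyz : z ∩ Iic (supK κ b) = y ∩ Iic (supK κ b)) :
    b ∈ avoidSet κ F ξ A z := by
  obtain ⟨hbA, hby, hF⟩ := hb
  have hz : ∀ δ ≤ supK κ b, δ ∈ y → δ ∈ z := fun δ hδ hδy =>
    (hyz.symm ▸ ⟨hδy, hδ⟩ : δ ∈ z ∩ Iic (supK κ b)).1
  have hy : ∀ δ ≤ supK κ b, δ ∈ z → δ ∈ y := fun δ hδ hδz =>
    (hyz ▸ ⟨hδz, hδ⟩ : δ ∈ y ∩ Iic (supK κ b)).1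
  exact ⟨hbA, hz _ le_rfl hby, fun δ hδz hδ => hF δ (hy δ hδ.le hδz) hδ⟩

theorem denseOpen_avoidSet {lam : Cardinal.{0}} (hreg : κ.IsRegular) (hlt : κ < lam)
    (H : IdealP κ lam) (hA : A ⊆ smallSet κ lam)
    (hξ : ∀ γ < κ.ord, {b ∈ A | ∀ δ < γ, F δ b ≠ ξ} ∉ H.mem)
    {C : Set (Set Ordinal.{0})} (hC : C ∈ H.mem) :
    DenseOpen κ κ {y ∈ cantor κ | ¬ avoidSet κ F ξ A y ⊆ C} := by
  refine ⟨fun y hy => hy.1, ?_, ?_⟩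
  · rintro y ⟨hy, hyC⟩
    obtain ⟨b, hb, hbC⟩ := not_subset.mp hyC
    have hβ : supK κ b < κ.ord := supK_lt_ord hreg (hA hb.1).2
    refine ⟨Iic (supK κ b), y ∩ Iic (supK κ b), ⟨fun δ hδ => lt_of_le_of_lt hδ hβ,
      inter_subset_right, ?_⟩, ⟨hy, rfl⟩, ?_⟩
    · rw [← Order.Iio_succ, Cardinal.mk_Iio_ordinal, Cardinal.lift_lt, ← Cardinal.lt_ord]
      exact (Cardinal.isSuccLimit_ord hreg.aleph0_le).succ_lt hβ
    · rintro z ⟨hz, hzy⟩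
      exact ⟨hz, not_subset.mpr ⟨b, mem_avoidSet_of_inter_eq hb hzy, hbC⟩⟩
  · rintro a t ⟨ha, hta, hac⟩
    obtain ⟨γ, hγ, haγ⟩ := exists_lt_ord_forall_lt hreg ha hac
    obtain ⟨b, ⟨hbA, hbF⟩, hbU⟩ := H.exists_mem_notMem (hξ γ hγ)
      (H.union_mem hreg.aleph0_le hC (H.supK_lt_mem hreg.aleph0_le hlt hγ))
    have hγb : γ ≤ supK κ b := not_lt.mp fun h => hbU (Or.inr ⟨hA hbA, h⟩)
    have hy : insert (supK κ b) t ⊆ Iio κ.ord :=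
      insert_subset (supK_lt_ord hreg (hA hbA).2) (hta.trans ha)
    have hya : insert (supK κ b) t ∩ a = t := by
      rw [insert_inter_of_notMem fun h => (haγ _ h).not_ge hγb, inter_eq_left.mpr hta]
    have hbmem : b ∈ avoidSet κ F ξ A (insert (supK κ b) t) := by
      refine ⟨hbA, mem_insert _ _, ?_⟩
      rintro δ (rfl | hδt) hδ
      · exact absurd hδ (lt_irrefl _)
      · exact hbF δ (haγ δ (hta hδt))
    exact ⟨_, ⟨hy, hya⟩, hy, not_subset.mpr ⟨b, hbmem, fun h => hbU (Or.inl h)⟩⟩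

end Avoid

theorem sqBrP_kappa_succ_general (κ lam : Cardinal.{0}) (hreg : κ.IsRegular)
    (hlim : Order.IsSuccLimit κ) (hlt : κ < lam) (H : IdealP κ lam) (hcof : H.cof < covM κ κ) :
    ∀ F : Ordinal.{0} → Set Ordinal.{0} → Ordinal.{0},
      (∀ p ∈ pairsK κ (smallSet κ lam), F p.1 p.2 < (Order.succ κ).ord) →
      ∀ A ∈ H.plus, ∃ B ∈ H.plus, B ⊆ A ∧
        {ξ | ∃ p ∈ pairsK κ B, F p.1 p.2 = ξ} ≠ Iio (Order.succ κ).ord := by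
  rintro F - A ⟨hAsub, hA⟩
  obtain ⟨ξ, hξ, hfree⟩ := H.exists_color_avoided_on_positive hreg hlim hA F
  obtain ⟨X, ⟨hXH, hXcof⟩, hXcard⟩ := H.exists_cofinal_lift_cof_eq
  obtain ⟨x, -, hx⟩ := exists_forall_mem_of_lt_covM hreg.pos.ne'
    (𝒟 := (fun C => {y ∈ cantor κ | ¬ avoidSet κ F ξ A y ⊆ C}) '' X)
    (by rintro _ ⟨C, hC, rfl⟩; exact denseOpen_avoidSet hreg hlt H hAsub hfree (hXH hC))
    (Cardinal.mk_image_le.trans_lt (hXcard ▸ Cardinal.lift_lt.mpr hcof))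
  refine ⟨avoidSet κ F ξ A x, ⟨fun b hb => hAsub hb.1, fun hB => ?_⟩, fun b hb => hb.1,
    fun h => notMem_image_pairsK_avoidSet x (by rw [h]; exact hξ)⟩
  obtain ⟨C, hC, hBC⟩ := (hXcof _).mp hB
  exact (hx _ ⟨C, hC, rfl⟩).2 hBC

/-- Suppose `κ` is a regular limit cardinal and `H` is an ideal on `P_κ(λ)`
with `cof(H) < cov(M_{κ,κ})`. Then `H⁺ →_κ [H⁺]_{κ⁺}²`. -/
theorem sqBrP_kappa_succ (κ lam : Cardinal.{0}) (hreg : κ.IsRegular) (huc : ℵ₀ < κ)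
    (hlim : Order.IsSuccLimit κ) (hlt : κ < lam) (H : IdealP κ lam) (hcof : H.cof < covM κ κ) :
    ∀ F : Ordinal.{0} → Set Ordinal.{0} → Ordinal.{0},
      (∀ p ∈ pairsK κ (smallSet κ lam), F p.1 p.2 < (Order.succ κ).ord) →
      ∀ A ∈ H.plus, ∃ B ∈ H.plus, B ⊆ A ∧
        {ξ | ∃ p ∈ pairsK κ B, F p.1 p.2 = ξ} ≠ Iio (Order.succ κ).ord :=
  sqBrP_kappa_succ_general κ lam hreg hlim hlt H hcof

end PaperFormal
end

section
/- Suppose ρ ∈ K(κ,λ) and ρ ≥ d̄_κ. Then I_{κ,λ}⁺ ↛_κ [I_{κ,λ}⁺]_ρ²: there exist F : [P_κ(λ)]_κ² → ρ and A ∈ I_{κ,λ}⁺ such that F''[B]_κ² = ρ for every B ∈ I_{κ,λ}⁺ ∩ P(A). -/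
open Cardinal Set

/-!
Index a `d̄_κ`-witness as `π_ξ` (`ξ < ρ`) and, using `ρ ∈ K(κ,λ)` shifted above `κ`, pick small
sets `e_ξ ⊆ [κ, λ)` (`ξ < ρ`) such that every `a ∈ P_κ(λ)` includes fewer than `κ` of them. For
`b ∈ P_κ(λ)` the set `S_b = {ξ : e_ξ ⊆ b}` depends only on `b ∖ κ`; list it as `ξ_i` (`i < τ < κ`)
and climb by `α_i = sup_{j<i} max(α_j + 1, sup_{ξ ∈ S_b} π_ξ(α_j))`. Put `b` in `A` when
`b ∩ κ = [0, α_τ]`, and let `F(η, b) = ξ_i` for `α_i ≤ η < α_{i+1}`. Then `A` is cofinal. If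
`B ⊆ A` is cofinal and `ξ < ρ`, let `g(α) = ∪(a ∩ κ) > α` for some `a ∈ B`, dominate `g` by the
`π_ζ` with `ζ ∈ c`, and take `b ∈ B` containing `e_ξ` and every `e_ζ` (`ζ ∈ c`). If `ξ = ξ_i` in
`S_b`, then `α_i < g(α_i) < α_{i+1} ≤ ∪(b ∩ κ)`, so `F(g(α_i), b) = ξ`.
-/

namespace PaperFormal

open Function Order

universe u

section CardinalFacts

theorem exists_injOn_mapsTo_of_mk_le {α β : Type u} [Nonempty β] {s : Set α} {t : Set β}
    (h : #s ≤ #t) : ∃ f : α → β, InjOn f s ∧ MapsTo f s t := by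
  obtain ⟨e⟩ := h
  set f := extend Subtype.val (fun x : s => (e x : β)) fun _ => Classical.arbitrary β
  have hf : ∀ x : s, f x = e x := Subtype.val_injective.extend_apply _ _
  refine ⟨f, fun x hx y hy hxy => ?_, fun x hx => (hf ⟨x, hx⟩).symm ▸ (e ⟨x, hx⟩).2⟩
  rw [hf ⟨x, hx⟩, hf ⟨y, hy⟩] at hxy
  exact congrArg Subtype.val (e.injective (Subtype.ext hxy))

theorem exists_mapsTo_surjOn_of_mk_le {α β : Type u} {s : Set α} {t : Set β} (ht : t.Nonempty)
    (h : #t ≤ #s) : ∃ f : α → β, MapsTo f s t ∧ SurjOn f s t := by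
  obtain ⟨e⟩ := h
  have : Nonempty t := ht.to_subtype
  set f := extend Subtype.val (fun x : s => ((invFun (⇑e) x : t) : β)) fun _ => ht.some
  have hf : ∀ x : s, f x = (invFun (⇑e) x : t) := Subtype.val_injective.extend_apply _ _
  refine ⟨f, fun x hx => (hf ⟨x, hx⟩).symm ▸ (invFun (⇑e) ⟨x, hx⟩).2, fun y hy => ?_⟩
  refine ⟨e ⟨y, hy⟩, (e ⟨y, hy⟩).2, ?_⟩
  rw [hf, leftInverse_invFun e.injective]

variable {κ : Cardinal.{u}}

theorem sSup_lt_ord_of_isRegular (hκ : κ.IsRegular) {s : Set Ordinal.{u}}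
    (hs : #s < lift.{u + 1} κ) (hsκ : s ⊆ Iio κ.ord) : sSup s < κ.ord :=
  Ordinal.sSup_lt_of_lt_cof (by rwa [← Ordinal.lift_cof, hκ.cof_ord]) hsκ

theorem exists_subset_image_Iio_of_mk_lt (hκ : κ.IsRegular) {s : Set Ordinal.{u}}
    (hs : #s < lift.{u + 1} κ) : ∃ τ < κ.ord, ∃ f : Ordinal.{u} → Ordinal.{u}, s ⊆ f '' Iio τ := by
  obtain ⟨g, hg, hgs⟩ := exists_injOn_mapsTo_of_mk_le (s := s) (t := Iio κ.ord)
    (by rw [mk_Iio_ordinal, card_ord]; exact hs.le)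
  have hsup : sSup (g '' s) < κ.ord :=
    sSup_lt_ord_of_isRegular hκ (mk_image_le.trans_lt hs) hgs.image_subset
  refine ⟨succ (sSup (g '' s)), (isSuccLimit_ord hκ.aleph0_le).succ_lt hsup, invFunOn g s,
    fun ξ hξ => ⟨g ξ, ?_, hg.leftInvOn_invFunOn hξ⟩⟩
  exact lt_succ_iff.2 (le_csSup (bddAbove_Iio.mono hgs.image_subset) (mem_image_of_mem g hξ))

end CardinalFacts

section Climb

variable (M : Ordinal.{u} → Ordinal.{u})

noncomputable def climb : Ordinal.{u} → Ordinal.{u} :=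
  Ordinal.lt_wf.fix fun i rec => ⨆ j : Iio i, max (succ (rec j j.2)) (M (rec j j.2))

theorem climb_eq (i : Ordinal.{u}) :
    climb M i = ⨆ j : Iio i, max (succ (climb M j)) (M (climb M j)) :=
  Ordinal.lt_wf.fix_eq _ i

noncomputable def climbIndex (η : Ordinal.{u}) : Ordinal.{u} :=
  sSup {i | climb M i ≤ η}

variable {M}

theorem max_le_climb {i j : Ordinal.{u}} (h : j < i) :
    max (succ (climb M j)) (M (climb M j)) ≤ climb M i := by
  rw [climb_eq M i]
  exact Ordinal.le_iSup (fun j : Iio i => max (succ (climb M j)) (M (climb M j))) ⟨j, h⟩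

theorem climb_strictMono : StrictMono (climb M) := fun _ _ h =>
  (lt_succ _).trans_le ((le_max_left _ _).trans (max_le_climb h))

theorem map_climb_le {i j : Ordinal.{u}} (h : j < i) : M (climb M j) ≤ climb M i :=
  (le_max_right _ _).trans (max_le_climb h)

theorem climb_lt_ord {κ : Cardinal.{u}} (hκ : κ.IsRegular) (hM : ∀ β < κ.ord, M β < κ.ord)
    {i : Ordinal.{u}} (hi : i < κ.ord) : climb M i < κ.ord := by
  induction i using WellFoundedLT.induction with
  | _ i ih =>
    rw [climb_eq, iSup]
    refine sSup_lt_ord_of_isRegular hκ ?_ ?_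
    · exact mk_range_le.trans_lt (by rw [mk_Iio_ordinal, lift_lt]; exact lt_ord.1 hi)
    · rintro _ ⟨⟨j, hj⟩, rfl⟩
      have hj' := ih j hj (hj.trans hi)
      exact max_lt ((isSuccLimit_ord hκ.aleph0_le).succ_lt hj') (hM _ hj')

theorem climbIndex_eq {i η : Ordinal.{u}} (h₁ : climb M i ≤ η) (h₂ : η < climb M (succ i)) :
    climbIndex M η = i := by
  have : {i' | climb M i' ≤ η} = Iic i := by
    ext i'
    refine ⟨fun h => lt_succ_iff.1 (climb_strictMono.lt_iff_lt.1 (lt_of_le_of_lt h h₂)),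
      fun h => (climb_strictMono.monotone h).trans h₁⟩
  rw [climbIndex, this, csSup_Iic]

end Climb

section SmallSets

variable {κ lam : Cardinal.{0}}

theorem union_mem_smallSet (hκ : ℵ₀ ≤ κ) {a b : Set Ordinal.{0}} (ha : a ∈ smallSet κ lam)
    (hb : b ∈ smallSet κ lam) : a ∪ b ∈ smallSet κ lam :=
  ⟨union_subset ha.1 hb.1,
    (mk_union_le a b).trans_lt (add_lt_of_lt (aleph0_le_lift.2 hκ) ha.2 hb.2)⟩

theorem biUnion_mem_smallSet (hκ : κ.IsRegular) {c : Set Ordinal.{0}}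
    {t : Ordinal.{0} → Set Ordinal.{0}} (hc : #c < lift κ) (ht : ∀ ξ ∈ c, t ξ ∈ smallSet κ lam) :
    ⋃ ξ ∈ c, t ξ ∈ smallSet κ lam :=
  ⟨iUnion₂_subset fun ξ hξ => (ht ξ hξ).1,
    (card_biUnion_lt_iff_forall_of_isRegular hκ.lift hc).2 fun ξ hξ => (ht ξ hξ).2⟩

theorem Iic_mem_smallSet (hκ : ℵ₀ ≤ κ) (hlam : κ ≤ lam) {γ : Ordinal.{0}} (hγ : γ < κ.ord) :
    Iic γ ∈ smallSet κ lam := by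
  have hγ' : succ γ < κ.ord := (isSuccLimit_ord hκ).succ_lt hγ
  refine ⟨fun x hx => (lt_of_le_of_lt hx hγ).trans_le (ord_le_ord.2 hlam), ?_⟩
  rwa [← Iio_succ, mk_Iio_ordinal, lift_lt, ← lt_ord]

theorem supK_lt_ord_s17 (hκ : κ.IsRegular) {a : Set Ordinal.{0}} (ha : a ∈ smallSet κ lam) :
    supK κ a < κ.ord :=
  sSup_lt_ord_of_isRegular hκ ((mk_le_mk_of_subset inter_subset_left).trans_lt ha.2)
    inter_subset_right

theorem le_supK_s17 {a : Set Ordinal.{0}} {γ : Ordinal.{0}} (hγ : γ ∈ a) (hγκ : γ < κ.ord) :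
    γ ≤ supK κ a :=
  le_csSup (bddAbove_Iio.mono inter_subset_right) ⟨hγ, hγκ⟩

theorem mem_plusOf_Ikl_iff {B : Set (Set Ordinal.{0})} :
    B ∈ plusOf κ lam (Ikl κ lam) ↔ B ⊆ smallSet κ lam ∧ ∀ a ∈ smallSet κ lam, ∃ b ∈ B, a ⊆ b := by
  refine ⟨fun hB => ⟨hB.1, fun a ha => ?_⟩, fun hB => ⟨hB.1, fun ⟨_, a, ha, hout⟩ => ?_⟩⟩
  · by_contra! h
    exact hB.2 ⟨hB.1, a, ha, h⟩
  · obtain ⟨b, hb, hab⟩ := hB.2 a ha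
    exact hout b hb hab

theorem exists_lt_supK_of_mem_plusOf_Ikl (hκ : ℵ₀ ≤ κ) (hlam : κ ≤ lam)
    {B : Set (Set Ordinal.{0})} (hB : B ∈ plusOf κ lam (Ikl κ lam)) {β : Ordinal.{0}}
    (hβ : β < κ.ord) : ∃ a ∈ B, β < supK κ a := by
  have hβ' : succ β < κ.ord := (isSuccLimit_ord hκ).succ_lt hβ
  obtain ⟨a, ha, hsub⟩ := (mem_plusOf_Ikl_iff.1 hB).2 _ (Iic_mem_smallSet hκ hlam hβ')
  exact ⟨a, ha, (lt_succ β).trans_le (le_supK_s17 (hsub (mem_Iic.2 le_rfl)) hβ')⟩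

end SmallSets

section ThinFamilies

variable {κ lam ρ : Cardinal.{0}}

def codesIn (ρ : Cardinal.{0}) (t : Ordinal.{0} → Set Ordinal.{0}) (b : Set Ordinal.{0}) :
    Set Ordinal.{0} :=
  {ξ | ξ < ρ.ord ∧ t ξ ⊆ b}

/-- An indexed form of the witnesses to `ρ ∈ K(κ,λ)`. -/
def IsThinFamily (κ lam ρ : Cardinal.{0}) (t : Ordinal.{0} → Set Ordinal.{0}) : Prop :=
  (∀ ξ < ρ.ord, t ξ ∈ smallSet κ lam) ∧ ∀ a ∈ smallSet κ lam, #(codesIn ρ t a) < lift κ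

theorem codesIn_subset_Iio {t : Ordinal.{0} → Set Ordinal.{0}} {b : Set Ordinal.{0}} :
    codesIn ρ t b ⊆ Iio ρ.ord :=
  fun _ hξ => hξ.1

theorem exists_isThinFamily_of_mem_Kset (hρ : ρ ∈ Kset κ lam) :
    ∃ t, IsThinFamily κ lam ρ t := by
  obtain ⟨-, T, hT, hTcard, hTthin⟩ := hρ
  obtain ⟨t, hinj, hmaps⟩ := exists_injOn_mapsTo_of_mk_le (s := Iio ρ.ord) (t := T)
    (by rw [mk_Iio_ordinal, card_ord, hTcard])
  refine ⟨t, fun ξ hξ => hT (hmaps hξ), fun a ha => ?_⟩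
  calc #(codesIn ρ t a) = #(t '' codesIn ρ t a) :=
        (mk_image_eq_of_injOn _ _ (hinj.mono codesIn_subset_Iio)).symm
    _ ≤ #{x ∈ T | x ⊆ a} :=
        mk_le_mk_of_subset (by rintro _ ⟨ξ, hξ, rfl⟩; exact ⟨hmaps hξ.1, hξ.2⟩)
    _ < lift κ := hTthin a ha

theorem IsThinFamily.shift (hlam : ℵ₀ ≤ lam) (hκlam : κ < lam) {t : Ordinal.{0} → Set Ordinal.{0}}
    (ht : IsThinFamily κ lam ρ t) : IsThinFamily κ lam ρ fun ξ => (κ.ord + ·) '' t ξ := by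
  have hadd : ∀ γ < lam.ord, κ.ord + γ < lam.ord :=
    fun γ hγ => Ordinal.isPrincipal_add_ord hlam (ord_lt_ord.2 hκlam) hγ
  refine ⟨fun ξ hξ => ⟨?_, mk_image_le.trans_lt (ht.1 ξ hξ).2⟩, fun a ha => ?_⟩
  · rintro _ ⟨γ, hγ, rfl⟩
    exact hadd γ ((ht.1 ξ hξ).1 hγ)
  · set a' := Iio lam.ord ∩ (κ.ord + ·) ⁻¹' a
    have ha' : a' ∈ smallSet κ lam := ⟨inter_subset_left,
      ((mk_le_mk_of_subset inter_subset_right).trans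
        (mk_preimage_of_injective _ a (add_right_injective κ.ord))).trans_lt ha.2⟩
    have hsub : codesIn ρ (fun ξ => (κ.ord + ·) '' t ξ) a ⊆ codesIn ρ t a' := fun ξ hξ =>
      ⟨hξ.1, fun γ hγ => ⟨(ht.1 ξ hξ.1).1 hγ, hξ.2 (mem_image_of_mem _ hγ)⟩⟩
    exact (mk_le_mk_of_subset hsub).trans_lt (ht.2 a' ha')

end ThinFamilies

section Dominating

variable {κ ρ : Cardinal.{0}}

theorem exists_eq_leastCard {X : Type 1} {P : Set X → Prop} {F : Set X} (hF : P F)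
    [Small.{0} F] : ∃ G, P G ∧ lift (leastCard P) = #G :=
  csInf_mem (s := {c : Cardinal.{0} | ∃ G : Set X, P G ∧ lift c = #G})
    ⟨#(Shrink.{0} F), F, hF, lift_mk_shrink'' F⟩

theorem exists_domBar_family (hκ : κ.IsRegular) :
    ∃ X, (X ⊆ funOn κ ∧ ∀ g ∈ funOn κ, ∃ x ⊆ X, x.Nonempty ∧ #x < lift κ ∧
      ∀ α < κ.ord, g α < sSup {o | ∃ f ∈ x, f α = o}) ∧ lift (domBar κ) = #X := by
  have hsucc : ∀ β < κ.ord, succ β < κ.ord := fun β => (isSuccLimit_ord hκ.aleph0_le).succ_lt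
  set padZero : (Iio κ.ord → Iio κ.ord) → Ordinal.{0} → Ordinal.{0} :=
    fun g α => if h : α < κ.ord then g ⟨α, h⟩ else 0
  have hpad : ∀ g α (hα : α < κ.ord), padZero g α = g ⟨α, hα⟩ := fun g α hα => dif_pos hα
  apply exists_eq_leastCard (F := range padZero)
  refine ⟨?_, fun g hg => ?_⟩
  · rintro _ ⟨g, rfl⟩ α hα
    exact hpad g α hα ▸ (g ⟨α, hα⟩).2
  · set g' : Iio κ.ord → Iio κ.ord := fun α => ⟨succ (g α), hsucc _ (hg α α.2)⟩
    set f := padZero g'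
    refine ⟨{f}, singleton_subset_iff.2 ⟨g', rfl⟩, singleton_nonempty f, ?_,
      fun α hα => ?_⟩
    · rw [mk_singleton]
      exact one_lt_aleph0.trans_le (aleph0_le_lift.2 hκ.aleph0_le)
    · have : {o | ∃ f' ∈ ({f} : Set _), f' α = o} = {succ (g α)} := by
        ext o
        simp [f, g', hpad _ α hα, eq_comm]
      rw [this, csSup_singleton]
      exact lt_succ _

theorem exists_dominating_of_domBar_le (hκ : κ.IsRegular) (hρ : domBar κ ≤ ρ) :
    ∃ π : Ordinal.{0} → Ordinal.{0} → Ordinal.{0}, (∀ ξ < ρ.ord, π ξ ∈ funOn κ) ∧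
      ∀ g ∈ funOn κ, ∃ c ⊆ Iio ρ.ord, #c < lift κ ∧
        ∀ α < κ.ord, g α < sSup ((π · α) '' c) := by
  obtain ⟨X, ⟨hX, hdom⟩, hXcard⟩ := exists_domBar_family hκ
  have hκ0 : (0 : Ordinal) < κ.ord := ord_pos.2 (aleph0_pos.trans_le hκ.aleph0_le)
  obtain ⟨x₀, hx₀X, ⟨f, hf⟩, -⟩ := hdom (fun _ => 0) fun _ _ => hκ0
  obtain ⟨π, hmaps, hsurj⟩ := exists_mapsTo_surjOn_of_mk_le (s := Iio ρ.ord) ⟨f, hx₀X hf⟩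
    (by rw [← hXcard, mk_Iio_ordinal, card_ord, lift_le]; exact hρ)
  refine ⟨π, fun ξ hξ => hX (hmaps hξ), fun g hg => ?_⟩
  obtain ⟨x, hxX, -, hx, hgx⟩ := hdom g hg
  obtain ⟨c, hc, hbij⟩ := (hsurj.mono subset_rfl hxX).exists_bijOn_subset
  have hcx : #c = #x := by rw [← hbij.image_eq, mk_image_eq_of_injOn _ _ hbij.injOn]
  refine ⟨c, hc, hcx ▸ hx, fun α hα => ?_⟩
  simpa [← hbij.image_eq, Set.image] using hgx α hα

end Dominating

/-- The ingredients `dom ξ = π_ξ` and `code ξ = e_ξ` of the construction, and `enum s` listing a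
small set `s` as `ξ_i`, `i < len s`. -/
structure ColoringData (κ lam ρ : Cardinal.{0}) where
  dom : Ordinal.{0} → Ordinal.{0} → Ordinal.{0}
  dom_mem : ∀ ξ < ρ.ord, dom ξ ∈ funOn κ
  exists_dominate : ∀ g ∈ funOn κ, ∃ c ⊆ Iio ρ.ord, #c < lift κ ∧
    ∀ α < κ.ord, g α < sSup ((dom · α) '' c)
  code : Ordinal.{0} → Set Ordinal.{0}
  isThinFamily_code : IsThinFamily κ lam ρ code
  code_subset_Ici : ∀ ξ, code ξ ⊆ Ici κ.ord
  len : Set Ordinal.{0} → Ordinal.{0}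
  enum : Set Ordinal.{0} → Ordinal.{0} → Ordinal.{0}
  len_lt : ∀ s : Set Ordinal.{0}, #s < lift κ → len s < κ.ord
  subset_image_enum : ∀ s : Set Ordinal.{0}, #s < lift κ → s ⊆ enum s '' Iio (len s)

namespace ColoringData

variable {κ lam ρ : Cardinal.{0}} (D : ColoringData κ lam ρ)

noncomputable def bound (S : Set Ordinal.{0}) (β : Ordinal.{0}) : Ordinal.{0} :=
  sSup ((D.dom · β) '' S)

noncomputable def top (S : Set Ordinal.{0}) : Ordinal.{0} :=
  climb (D.bound S) (D.len S)

noncomputable def domain : Set (Set Ordinal.{0}) :=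
  {b | b ∈ smallSet κ lam ∧ b ∩ Iio κ.ord = Iic (D.top (codesIn ρ D.code b))}

noncomputable def color (η : Ordinal.{0}) (b : Set Ordinal.{0}) : Ordinal.{0} :=
  let S := codesIn ρ D.code b
  let ξ := D.enum S (climbIndex (D.bound S) η)
  if ξ < ρ.ord then ξ else 0

variable {D}

theorem codesIn_union_of_subset_Iio {h L : Set Ordinal.{0}} (hL : L ⊆ Iio κ.ord) :
    codesIn ρ D.code (h ∪ L) = codesIn ρ D.code h := by
  ext ξ
  refine and_congr_right fun _ => ⟨fun hξ γ hγ => (hξ hγ).resolve_right fun hγL => ?_,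
    fun hξ => hξ.trans subset_union_left⟩
  exact (mem_Iio.1 (hL hγL)).not_ge (D.code_subset_Ici ξ hγ)

theorem bound_lt (hκ : κ.IsRegular) {S : Set Ordinal.{0}} (hS : S ⊆ Iio ρ.ord)
    (hS' : #S < lift κ) {β : Ordinal.{0}} (hβ : β < κ.ord) : D.bound S β < κ.ord :=
  sSup_lt_ord_of_isRegular hκ (mk_image_le.trans_lt hS') <| by
    rintro _ ⟨ξ, hξ, rfl⟩
    exact D.dom_mem ξ (hS hξ) β hβ

theorem bound_mono {S c : Set Ordinal.{0}} (hS : S ⊆ Iio ρ.ord) (hcS : c ⊆ S)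
    {β : Ordinal.{0}} (hβ : β < κ.ord) : D.bound c β ≤ D.bound S β := by
  refine csSup_le_csSup' ⟨κ.ord, ?_⟩ (image_mono hcS)
  rintro _ ⟨ξ, hξ, rfl⟩
  exact (D.dom_mem ξ (hS hξ) β hβ).le

theorem top_lt (hκ : κ.IsRegular) {S : Set Ordinal.{0}} (hS : S ⊆ Iio ρ.ord)
    (hS' : #S < lift κ) : D.top S < κ.ord :=
  climb_lt_ord hκ (fun _ => D.bound_lt hκ hS hS') (D.len_lt S hS')

theorem climb_bound_lt (hκ : κ.IsRegular) {S : Set Ordinal.{0}} (hS : S ⊆ Iio ρ.ord)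
    (hS' : #S < lift κ) {i : Ordinal.{0}} (hi : i < D.len S) : climb (D.bound S) i < κ.ord :=
  climb_lt_ord hκ (fun _ => D.bound_lt hκ hS hS') (hi.trans (D.len_lt S hS'))

theorem climb_succ_le_top {S : Set Ordinal.{0}} {i : Ordinal.{0}} (hi : i < D.len S) :
    climb (D.bound S) (succ i) ≤ D.top S :=
  climb_strictMono.monotone (succ_le_of_lt hi)

theorem lt_climb_succ (hκ : κ.IsRegular) {S c : Set Ordinal.{0}} (hS : S ⊆ Iio ρ.ord)
    (hS' : #S < lift κ) (hcS : c ⊆ S) {i x : Ordinal.{0}} (hi : i < D.len S)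
    (hx : x < D.bound c (climb (D.bound S) i)) : x < climb (D.bound S) (succ i) :=
  hx.trans_le <| (D.bound_mono hS hcS (D.climb_bound_lt hκ hS hS' hi)).trans
    (map_climb_le (lt_succ i))

theorem supK_eq_top {b : Set Ordinal.{0}} (hb : b ∈ D.domain) :
    supK κ b = D.top (codesIn ρ D.code b) := by
  rw [supK, hb.2, csSup_Iic]

theorem union_Iic_mem_domain (hκ : κ.IsRegular) (hlam : κ ≤ lam) {h : Set Ordinal.{0}}
    (hh : h ∈ smallSet κ lam) (hlow : h ∩ Iio κ.ord ⊆ Iic (D.top (codesIn ρ D.code h))) :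
    h ∪ Iic (D.top (codesIn ρ D.code h)) ∈ D.domain := by
  have hT := D.top_lt hκ codesIn_subset_Iio (D.isThinFamily_code.2 h hh)
  have hTκ : Iic (D.top (codesIn ρ D.code h)) ⊆ Iio κ.ord := Iic_subset_Iio.2 hT
  refine ⟨union_mem_smallSet hκ.aleph0_le hh (Iic_mem_smallSet hκ.aleph0_le hlam hT), ?_⟩
  rw [codesIn_union_of_subset_Iio hTκ, union_inter_distrib_right, inter_eq_left.2 hTκ,
    union_eq_right.2 hlow]

theorem exists_superset_mem_domain (hκ : κ.IsRegular) (hlam : κ ≤ lam) {a : Set Ordinal.{0}}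
    (ha : a ∈ smallSet κ lam) : ∃ b ∈ D.domain, a ⊆ b := by
  obtain ⟨c, hcρ, hc, hdom⟩ := D.exists_dominate (fun _ => supK κ a) fun _ _ => supK_lt_ord_s17 hκ ha
  set h := a ∪ ⋃ ξ ∈ c, D.code ξ
  have hh : h ∈ smallSet κ lam := union_mem_smallSet hκ.aleph0_le ha
    (biUnion_mem_smallSet hκ hc fun ξ hξ => D.isThinFamily_code.1 ξ (hcρ hξ))
  set S := codesIn ρ D.code h
  have hS' : #S < lift κ := D.isThinFamily_code.2 h hh
  have hcS : c ⊆ S := fun ξ hξ => ⟨hcρ hξ, (subset_biUnion_of_mem hξ).trans subset_union_right⟩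
  have hκ0 : (0 : Ordinal) < κ.ord := ord_pos.2 (aleph0_pos.trans_le hκ.aleph0_le)
  obtain ⟨ξ, hξ⟩ : c.Nonempty := by
    by_contra! hc0
    simpa [hc0] using hdom 0 hκ0
  obtain ⟨i, hi, -⟩ := D.subset_image_enum S hS' (hcS hξ)
  have hlow : supK κ a < D.top S := (D.climb_succ_le_top hi).trans_lt' <|
    D.lt_climb_succ hκ codesIn_subset_Iio hS' hcS hi
      (hdom _ (D.climb_bound_lt hκ codesIn_subset_Iio hS' hi))
  refine ⟨_, D.union_Iic_mem_domain hκ hlam hh ?_, subset_union_left.trans subset_union_left⟩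
  rintro γ ⟨hγa | hγc, hγκ⟩
  · exact (le_supK_s17 hγa hγκ).trans hlow.le
  · obtain ⟨ζ, -, hγ⟩ := mem_iUnion₂.1 hγc
    exact absurd (D.code_subset_Ici ζ hγ) (mem_Iio.1 hγκ).not_ge

theorem domain_mem_plusOf (hκ : κ.IsRegular) (hlam : κ ≤ lam) :
    D.domain ∈ plusOf κ lam (Ikl κ lam) :=
  mem_plusOf_Ikl_iff.2 ⟨fun _ hb => hb.1, fun _ ha => D.exists_superset_mem_domain hκ hlam ha⟩

theorem color_lt (hρ : 0 < ρ.ord) (η : Ordinal.{0}) (b : Set Ordinal.{0}) :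
    D.color η b < ρ.ord := by
  dsimp only [color]
  split_ifs with h
  exacts [h, hρ]

theorem color_eq {b : Set Ordinal.{0}} {i η ξ : Ordinal.{0}}
    (h₁ : climb (D.bound (codesIn ρ D.code b)) i ≤ η)
    (h₂ : η < climb (D.bound (codesIn ρ D.code b)) (succ i))
    (hi : D.enum (codesIn ρ D.code b) i = ξ) (hξ : ξ < ρ.ord) : D.color η b = ξ := by
  simp only [color, climbIndex_eq h₁ h₂, hi, hξ, if_true]

theorem exists_color_eq (hκ : κ.IsRegular) (hlam : κ ≤ lam) {B : Set (Set Ordinal.{0})}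
    (hB : B ∈ plusOf κ lam (Ikl κ lam)) (hBD : B ⊆ D.domain) {ξ : Ordinal.{0}} (hξ : ξ < ρ.ord) :
    ∃ p ∈ pairsK κ B, D.color p.1 p.2 = ξ := by
  choose! next hnext using fun β (hβ : β < κ.ord) =>
    exists_lt_supK_of_mem_plusOf_Ikl hκ.aleph0_le hlam hB hβ
  obtain ⟨c, hcρ, hc, hdom⟩ := D.exists_dominate (fun α => supK κ (next α))
    fun α hα => supK_lt_ord_s17 hκ (hB.1 (hnext α hα).1)
  obtain ⟨b, hbB, hb⟩ := (mem_plusOf_Ikl_iff.1 hB).2 (D.code ξ ∪ ⋃ ζ ∈ c, D.code ζ)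
    (union_mem_smallSet hκ.aleph0_le (D.isThinFamily_code.1 ξ hξ)
      (biUnion_mem_smallSet hκ hc fun ζ hζ => D.isThinFamily_code.1 ζ (hcρ hζ)))
  set S := codesIn ρ D.code b
  have hS' : #S < lift κ := D.isThinFamily_code.2 b (hB.1 hbB)
  have hcS : c ⊆ S := fun ζ hζ =>
    ⟨hcρ hζ, ((subset_biUnion_of_mem hζ).trans subset_union_right).trans hb⟩
  obtain ⟨i, hi, hiξ⟩ := D.subset_image_enum S hS' ⟨hξ, subset_union_left.trans hb⟩
  have hα := D.climb_bound_lt hκ codesIn_subset_Iio hS' hi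
  obtain ⟨ha, hαa⟩ := hnext _ hα
  have hlt := D.lt_climb_succ hκ codesIn_subset_Iio hS' hcS hi (hdom _ hα)
  refine ⟨_, ⟨_, ha, b, hbB, ?_, rfl⟩, D.color_eq hαa.le hlt hiξ hξ⟩
  rw [D.supK_eq_top (hBD hbB)]
  exact hlt.trans_le (D.climb_succ_le_top hi)

theorem image_color_eq (hκ : κ.IsRegular) (hlam : κ ≤ lam) (hρ : 0 < ρ.ord)
    {B : Set (Set Ordinal.{0})} (hB : B ∈ plusOf κ lam (Ikl κ lam)) (hBD : B ⊆ D.domain) :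
    {ξ | ∃ p ∈ pairsK κ B, D.color p.1 p.2 = ξ} = Iio ρ.ord :=
  Subset.antisymm (by rintro _ ⟨p, -, rfl⟩; exact D.color_lt hρ _ _)
    fun _ hξ => D.exists_color_eq hκ hlam hB hBD hξ

theorem nonempty_of_domBar_le (hκ : κ.IsRegular) (hlt : κ < lam) (hρ : ρ ∈ Kset κ lam)
    (hρd : domBar κ ≤ ρ) : Nonempty (ColoringData κ lam ρ) := by
  obtain ⟨dom, hdom_mem, hdom⟩ := exists_dominating_of_domBar_le hκ hρd
  obtain ⟨t, ht⟩ := exists_isThinFamily_of_mem_Kset hρ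
  have henum : ∀ s : Set Ordinal.{0}, ∃ τ f, #s < lift κ → τ < κ.ord ∧ s ⊆ f '' Iio τ := by
    intro s
    by_cases hs : #s < lift κ
    · obtain ⟨τ, hτ, f, hf⟩ := exists_subset_image_Iio_of_mk_lt hκ hs
      exact ⟨τ, f, fun _ => ⟨hτ, hf⟩⟩
    · exact ⟨0, id, fun h => absurd h hs⟩
  choose len enum henum using henum
  exact ⟨dom, hdom_mem, hdom, _, ht.shift (hκ.aleph0_le.trans hlt.le) hlt,
    fun ξ => image_subset_iff.2 fun γ _ => (le_self_add : κ.ord ≤ κ.ord + γ), len, enum,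
    fun s hs => (henum s hs).1, fun s hs => (henum s hs).2⟩

end ColoringData

theorem not_sqBrP_of_ge_domBar_general (κ lam ρ : Cardinal.{0}) (hreg : κ.IsRegular)
    (hlt : κ < lam) (hρ : ρ ∈ Kset κ lam) (hρd : domBar κ ≤ ρ) :
    ∃ F : Ordinal.{0} → Set Ordinal.{0} → Ordinal.{0}, ∃ A : Set (Set Ordinal.{0}),
      (∀ p ∈ pairsK κ (smallSet κ lam), F p.1 p.2 < ρ.ord) ∧
      A ∈ plusOf κ lam (Ikl κ lam) ∧
      ∀ B ∈ plusOf κ lam (Ikl κ lam), B ⊆ A →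
        {ξ | ∃ p ∈ pairsK κ B, F p.1 p.2 = ξ} = Iio ρ.ord := by
  obtain ⟨D⟩ := ColoringData.nonempty_of_domBar_le hreg hlt hρ hρd
  have hρ0 : 0 < ρ.ord := ord_pos.2 ((zero_le (a := κ)).trans_lt hlt |>.trans_le hρ.1)
  exact ⟨D.color, D.domain, fun p _ => D.color_lt hρ0 p.1 p.2,
    D.domain_mem_plusOf hreg hlt.le, fun B hB hBD => D.image_color_eq hreg hlt.le hρ0 hB hBD⟩

/-- Suppose `ρ ∈ K(κ,λ)` and `ρ ≥ d̄_κ`. Then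
`I_{κ,λ}⁺ ↛_κ [I_{κ,λ}⁺]_ρ²`: there are `F : [P_κ(λ)]_κ² → ρ` and `A ∈ I_{κ,λ}⁺` such that
`F''[B]_κ² = ρ` for every `B ∈ I_{κ,λ}⁺ ∩ P(A)`. -/
theorem not_sqBrP_of_ge_domBar (κ lam ρ : Cardinal.{0}) (hreg : κ.IsRegular) (huc : ℵ₀ < κ)
    (hlt : κ < lam) (hρ : ρ ∈ Kset κ lam) (hρd : domBar κ ≤ ρ) :
    ∃ F : Ordinal.{0} → Set Ordinal.{0} → Ordinal.{0}, ∃ A : Set (Set Ordinal.{0}),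
      (∀ p ∈ pairsK κ (smallSet κ lam), F p.1 p.2 < ρ.ord) ∧
      A ∈ plusOf κ lam (Ikl κ lam) ∧
      ∀ B ∈ plusOf κ lam (Ikl κ lam), B ⊆ A →
        {ξ | ∃ p ∈ pairsK κ B, F p.1 p.2 = ξ} = Iio ρ.ord :=
  not_sqBrP_of_ge_domBar_general κ lam ρ hreg hlt hρ hρd

end PaperFormal
end
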